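/- arXiv:2411.13220 — 2 statements merged into one kernel-verified Lean document; each statement's English description precedes it below -/
import Mathlib

section
/- The sequencing operation ⋄ on indexed families of guarded languages with continuations is associative: for all indexed families G, H, K, (G ⋄ H) ⋄ K = G ⋄ (H ⋄ K). -/
/-- A guarded word: an initial atom followed by alternating actions and atoms. -/
abbrev GW (At Act : Type*) := At × List (Act × At)

/-- The last atom of a guarded word. -/
def GW.lastAtom {At Act : Type*} (w : GW At Act) : At :=
  (w.2.map Prod.snd).getLastD w.1

/-- Continuations: accept, break, return, or jump to a label. -/
inductive CFCont (I L : Type*) where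
  | acc (i : I)
  | brk (i : I)
  | ret
  | jmp (ℓ : L) (i : I)

/-- Indexed families of guarded languages with continuations. -/
abbrev Fam (At Act I L : Type*) := I → Set (GW At Act × CFCont I L)

/-- Sequencing (⋄) of indexed families: accepting traces of `G` compose with
traces of `H` (coalescing the shared atom); brk/ret/jmp traces pass through. -/
def seqF {At Act I L : Type*} (G H : Fam At Act I L) : Fam At Act I L := fun i =>
  { z | (∃ w m c j, (w, CFCont.acc j) ∈ G i ∧ ((GW.lastAtom w, m), c) ∈ H j ∧
          z = ((w.1, w.2 ++ m), c)) ∨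
        (∃ w c, (w, c) ∈ G i ∧ (∀ j, c ≠ CFCont.acc j) ∧ z = (w, c)) }

private lemma getLastD_append' {α : Type*} (l1 l2 : List α) (d : α) :
    (l1 ++ l2).getLastD d = l2.getLastD (l1.getLastD d) := by
  induction l1 generalizing d with
  | nil => rfl
  | cons a t ih => rw [List.cons_append, List.getLastD_cons, List.getLastD_cons, ih]

private lemma lastAtom_append {At Act : Type*} (w : GW At Act) (m : List (Act × At)) :
    GW.lastAtom ((w.1, w.2 ++ m) : GW At Act) = GW.lastAtom ((GW.lastAtom w, m) : GW At Act) := by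
  simp only [GW.lastAtom, List.map_append, getLastD_append']

/-- sequencing of indexed families is associative. -/
theorem seqF_assoc {At Act I L : Type*} (G H K : Fam At Act I L) :
    seqF (seqF G H) K = seqF G (seqF H K) := by
  funext i
  ext z
  constructor
  · rintro (⟨w, m, c, j, hw, hk, rfl⟩ | ⟨w, c, hw, hc, rfl⟩)
    · rcases hw with ⟨w1, m1, c1, j1, hg, hh, heq⟩ | ⟨w1, c1, hg, hc1, heq⟩
      · injection heq with hw1 hc1
        subst hc1
        left
        refine ⟨w1, m1 ++ m, c, j1, hg, Or.inl ⟨(GW.lastAtom w1, m1), m, c, j, hh, ?_, rfl⟩, ?_⟩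
        · rw [← lastAtom_append w1 m1, ← hw1]; exact hk
        · rw [hw1]; simp
      · injection heq with hw1 hc1
        subst hc1
        exact absurd rfl (hc1 j)
    · rcases hw with ⟨w1, m1, c1, j1, hg, hh, heq⟩ | ⟨w1, c1, hg, hc1, heq⟩
      · injection heq with hw1 hc1
        subst hc1
        exact Or.inl ⟨w1, m1, c, j1, hg,
          Or.inr ⟨(GW.lastAtom w1, m1), c, hh, hc, rfl⟩, hw1 ▸ rfl⟩
      · cases heq
        exact Or.inr ⟨w, c, hg, hc1, rfl⟩
  · rintro (⟨w, m, c, j, hg, hhk, rfl⟩ | ⟨w, c, hg, hc, rfl⟩)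
    · rcases hhk with ⟨⟨a1, l1⟩, m1, c1, j1, hh, hk, heq⟩ | ⟨w1, c1, hh, hc1, heq⟩
      · injection heq with hw1 hc1
        subst hc1
        injection hw1 with ha hm
        subst ha hm
        left
        refine ⟨(w.1, w.2 ++ l1), m1, c, j1,
          Or.inl ⟨w, l1, CFCont.acc j1, j, hg, hh, rfl⟩, ?_, by simp⟩
        rw [lastAtom_append w l1]
        exact hk
      · cases heq
        exact Or.inr ⟨(w.1, w.2 ++ m), c, Or.inl ⟨w, m, c, j, hg, hh, rfl⟩, hc1, rfl⟩
    · exact Or.inr ⟨w, c, Or.inr ⟨w, c, hg, hc, rfl⟩, hc, rfl⟩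
end

section
/- For finite X, iter(h) agrees with the explicitly recursive version: iter(h) = iter'(h)(∅), where iter'(h) : 2^X → X → ⊥ + E is defined by iter'(h)(M)(x) = ⊥ if x ∈ M; iter'(h)(M)(x) = h(x) if x ∉ M and h(x) ∈ ⊥ + E; and iter'(h)(M)(x) = iter'(h)(M ∪ {x})(h(x)) if x ∉ M and h(x) ∈ X. -/
/-!
`iter' h M x` follows the `h`-run from `x` until it leaves `X`, answering `⊥` as soon as the run
enters `M` or revisits a point. Every fixed point of `IterF h` agrees with the exit value of each
run that does leave `X`. Conversely `x ↦ iter' h ∅ x` is itself a fixed point, so the least fixed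
point `f` lies below it in the flat order; hence `f x` and `iter' h ∅ x` could only differ by
`f x = ⊥` while the run from `x` exits, which the first observation rules out.
-/

/-- The iteration functional: `F(f)(x) = f(h(x))` if `h(x) ∈ X`, else `h(x)`.
Values in `X → Option (X ⊕ E)`: `none` is ⊥, `some (inl x)` is a value in `X`,
`some (inr e)` is an exit result in `E`. -/
def IterF {X E : Type*} (h : X → Option (X ⊕ E)) (f : X → Option (X ⊕ E)) :
    X → Option (X ⊕ E) := fun x =>
  match h x with
  | some (Sum.inl x') => f x'
  | r => r

/-- The flat pointwise order on `X → Option (X ⊕ E)`: `f ≤ g` iff for every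
`x`, `f x = ⊥` or `f x = g x`. -/
def IterLE {X E : Type*} (f g : X → Option (X ⊕ E)) : Prop :=
  ∀ x, f x = none ∨ f x = g x

/-- The explicitly recursive iteration `iter'`, tracking the visited set `M`. -/
def iter' {X E : Type*} [Fintype X] [DecidableEq X] (h : X → Option (X ⊕ E))
    (M : Finset X) (x : X) : Option E :=
  if hx : x ∈ M then none
  else
    match h x with
    | none => none
    | some (Sum.inr e) => some e
    | some (Sum.inl x') => iter' h (insert x M) x'
termination_by Fintype.card X - M.card
decreasing_by
  have h1 : (insert x M).card = M.card + 1 := Finset.card_insert_of_notMem hx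
  have h2 : (insert x M).card ≤ Fintype.card X := Finset.card_le_univ _
  omega

section

variable {X E : Type*} {h : X → Option (X ⊕ E)} {x x' : X}

theorem iterF_apply_of_inl {f : X → Option (X ⊕ E)} (hhx : h x = some (.inl x')) :
    IterF h f x = f x' := by
  simp [IterF, hhx]

variable [Fintype X] [DecidableEq X] {M : Finset X}

theorem iter'_of_mem (hx : x ∈ M) : iter' h M x = none := by
  rw [iter', dif_pos hx]

theorem iter'_of_notMem_of_none (hx : x ∉ M) (hhx : h x = none) : iter' h M x = none := by
  rw [iter', dif_neg hx, hhx]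

theorem iter'_of_notMem_of_inr {e : E} (hx : x ∉ M) (hhx : h x = some (.inr e)) :
    iter' h M x = some e := by
  rw [iter', dif_neg hx, hhx]

theorem iter'_of_notMem_of_inl (hx : x ∉ M) (hhx : h x = some (.inl x')) :
    iter' h M x = iter' h (insert x M) x' := by
  rw [iter', dif_neg hx, hhx]

/-- A run from `x` avoiding `M` that reaches `z` moves on to `w`, which it has already visited,
so marking `z` as visited does not change the outcome. -/
theorem iter'_insert_of_next_mem {z w : X} (hz : h z = some (.inl w)) (hzM : z ∉ M)
    (hw : w ∈ insert x M) : iter' h (insert z M) x = iter' h M x := by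
  induction M, x using iter'.induct h with
  | case1 M x hx => rw [iter'_of_mem hx, iter'_of_mem (Finset.mem_insert_of_mem hx)]
  | case2 M x hx hhx =>
    have hxz : x ≠ z := by rintro rfl; simp [hhx] at hz
    rw [iter'_of_notMem_of_none hx hhx, iter'_of_notMem_of_none (by simp [hx, hxz]) hhx]
  | case3 M x hx e hhx =>
    have hxz : x ≠ z := by rintro rfl; simp [hhx] at hz
    rw [iter'_of_notMem_of_inr hx hhx, iter'_of_notMem_of_inr (by simp [hx, hxz]) hhx]
  | case4 M x hx x' hhx ih =>
    by_cases hxz : x = z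
    · subst hxz
      obtain rfl : x' = w := by simpa [hhx] using hz
      rw [iter'_of_mem (Finset.mem_insert_self x M), iter'_of_notMem_of_inl hx hhx,
        iter'_of_mem hw]
    rw [iter'_of_notMem_of_inl hx hhx, iter'_of_notMem_of_inl (by simp [hx, hxz]) hhx,
      Finset.insert_comm]
    exact ih (by simp [hzM, Ne.symm hxz]) (Finset.mem_insert_of_mem hw)

theorem iterF_iter'_empty :
    IterF h (fun x => (iter' h ∅ x).map Sum.inr) = fun x => (iter' h ∅ x).map Sum.inr := by
  funext x
  rcases hhx : h x with _ | (x' | e)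
  · simp [IterF, hhx, iter'_of_notMem_of_none (Finset.notMem_empty x) hhx]
  · rw [iterF_apply_of_inl hhx, iter'_of_notMem_of_inl (Finset.notMem_empty x) hhx,
      iter'_insert_of_next_mem hhx (Finset.notMem_empty x) (Finset.mem_insert_self x' ∅)]
  · simp [IterF, hhx, iter'_of_notMem_of_inr (Finset.notMem_empty x) hhx]

theorem apply_eq_of_iter'_eq_some {f : X → Option (X ⊕ E)} (hfix : IterF h f = f) {e : E}
    (hit : iter' h M x = some e) : f x = some (.inr e) := by
  induction M, x using iter'.induct h with
  | case1 M x hx => simp [iter'_of_mem hx] at hit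
  | case2 M x hx hhx => simp [iter'_of_notMem_of_none hx hhx] at hit
  | case3 M x hx e' hhx =>
    obtain rfl : e' = e := by simpa [iter'_of_notMem_of_inr hx hhx] using hit
    rw [← hfix]
    simp [IterF, hhx]
  | case4 M x hx x' hhx ih =>
    rw [← hfix, iterF_apply_of_inl hhx]
    exact ih (by rwa [← iter'_of_notMem_of_inl hx hhx])

end

/-- `iter(h)` (the least fixed point of the iteration
functional) agrees with the explicitly recursive version `iter'(h)(∅)`. -/
theorem iter_eq_iter' {X E : Type*} [Fintype X] [DecidableEq X]
    (h : X → Option (X ⊕ E)) (f : X → Option (X ⊕ E))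
    (hfix : IterF h f = f) (hleast : ∀ g, IterF h g = g → IterLE f g) :
    ∀ x, f x = (iter' h ∅ x).map Sum.inr := by
  intro x
  rcases hleast _ iterF_iter'_empty x with hfx | hfx
  · cases hit : iter' h ∅ x with
    | none => simpa using hfx
    | some e => simpa [hfx] using apply_eq_of_iter'_eq_some hfix hit
  · exact hfx
end
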